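/- arXiv:2304.10452 — 2 statements merged into one kernel-verified Lean document; each statement's English description precedes it below -/
import Mathlib

section
/- There is no embedding of the root lattice A_12 into the lattice T = D_4^{⊕3} ⊕ U^{⊕2}. -/
/-!
Reduce modulo 2. An isometric embedding `A₁₂ → T` with matrix `M` satisfies `Mᵀ T M = A₁₂`, so
over `𝔽₂` the rank of `A₁₂` is at most that of `T`. Since `det A₁₂ = 13` is odd, `A₁₂` stays
nondegenerate mod 2 and has rank 12; but the discriminant group of `T` is `(ℤ/2)⁶`, so `T` has
rank only `16 - 6 = 10` mod 2.
-/

open Matrix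

/-- Gram matrix of the root lattice `Aₙ` (rank `n`). -/
def Agram (n : ℕ) : Matrix (Fin n) (Fin n) ℤ := fun i j =>
  if i = j then 2
  else if (i : ℤ) - (j : ℤ) = 1 ∨ (j : ℤ) - (i : ℤ) = 1 then -1
  else 0

/-- Gram matrix of the `D₄` root lattice. -/
def D4gram : Matrix (Fin 4) (Fin 4) ℤ :=
  !![2, -1, 0, 0; -1, 2, -1, -1; 0, -1, 2, 0; 0, -1, 0, 2]

/-- Gram matrix of the hyperbolic plane `U`. -/
def Ugram : Matrix (Fin 2) (Fin 2) ℤ := !![0, 1; 1, 0]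

/-- Index type of the lattice `T = D₄^{⊕3} ⊕ U^{⊕2}`. -/
abbrev TIdx := (Fin 3 × Fin 4) ⊕ (Fin 2 × Fin 2)

/-- Gram matrix of `T = D₄^{⊕3} ⊕ U^{⊕2}` (orthogonal direct sum). -/
def Tgram : Matrix TIdx TIdx ℤ := fun a b =>
  match a, b with
  | Sum.inl (i, x), Sum.inl (j, y) => if i = j then D4gram x y else 0
  | Sum.inr (i, x), Sum.inr (j, y) => if i = j then Ugram x y else 0
  | _, _ => 0

section GramMatrix

variable {R : Type*} [CommRing R] {m n : Type*} [Fintype m] [Fintype n]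

theorem Matrix.transpose_mul_mul_eq_of_dotProduct_mulVec [DecidableEq n] {M : Matrix m n R}
    {G : Matrix m m R} {A : Matrix n n R}
    (h : ∀ v w : n → R, M *ᵥ v ⬝ᵥ G *ᵥ (M *ᵥ w) = v ⬝ᵥ A *ᵥ w) : Mᵀ * G * M = A := by
  have hform : ∀ v w : n → R, v ⬝ᵥ (Mᵀ * G * M) *ᵥ w = v ⬝ᵥ A *ᵥ w := fun v w => by
    rw [← mulVec_mulVec, ← mulVec_mulVec, dotProduct_mulVec, vecMul_transpose]
    exact h v w
  ext i j
  simpa [mulVec_single_one, single_one_dotProduct] using hform (Pi.single i 1) (Pi.single j 1)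

theorem Matrix.rank_map_le_of_transpose_mul_mul_eq {K : Type*} [Field K] (φ : R →+* K)
    {M : Matrix m n R} {G : Matrix m m R} {A : Matrix n n R} (h : Mᵀ * G * M = A) :
    (A.map φ).rank ≤ (G.map φ).rank := by
  rw [← h, Matrix.map_mul, Matrix.map_mul, transpose_map]
  exact (rank_mul_le_left _ _).trans (rank_mul_le_right _ _)

end GramMatrix

def agramTwelveInvModTwo : Matrix (Fin 12) (Fin 12) (ZMod 2) :=
  Matrix.of fun i j =>
    if i.val % 2 = 1 then (if j.val % 2 = 0 ∧ j < i then 1 else 0)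
    else (if j.val % 2 = 1 ∧ i < j then 1 else 0)

theorem agram_twelve_map_mul_agramTwelveInvModTwo :
    (Agram 12).map (Int.castRingHom (ZMod 2)) * agramTwelveInvModTwo = 1 := by
  decide

theorem rank_agram_twelve_map_two : ((Agram 12).map (Int.castRingHom (ZMod 2))).rank = 12 := by
  have hunit : IsUnit ((Agram 12).map (Int.castRingHom (ZMod 2))) :=
    (isUnit_iff_isUnit_det _).mpr
      (isUnit_det_of_right_inverse agram_twelve_map_mul_agramTwelveInvModTwo)
  simpa using rank_of_isUnit _ hunit

/-- Mod 2, columns `0`, `2`, `3` of the `D₄` Gram matrix coincide, so each `D₄` block only needs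
two column classes. -/
def tColumnClass : TIdx → (Fin 3 × Fin 2) ⊕ (Fin 2 × Fin 2)
  | .inl (i, x) => .inl (i, if x = 1 then 1 else 0)
  | .inr p => .inr p

def tColumnRep : (Fin 3 × Fin 2) ⊕ (Fin 2 × Fin 2) → TIdx
  | .inl (i, x) => .inl (i, Fin.castLE (by norm_num) x)
  | .inr p => .inr p

theorem tgram_map_two_eq_submatrix :
    Tgram.map (Int.castRingHom (ZMod 2)) =
      ((Tgram.map (Int.castRingHom (ZMod 2))).submatrix id tColumnRep).submatrix id
        tColumnClass := by
  decide

theorem rank_tgram_map_two_le : (Tgram.map (Int.castRingHom (ZMod 2))).rank ≤ 10 := by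
  rw [tgram_map_two_eq_submatrix]
  calc _ ≤ ((Tgram.map (Int.castRingHom (ZMod 2))).submatrix id tColumnRep).rank :=
        rank_submatrix_le _ _ _
    _ ≤ 10 := rank_le_card_width _

/-- There is no embedding of the root lattice `A₁₂` into `T = D₄^{⊕3} ⊕ U^{⊕2}`. -/
theorem no_embedding_A12_into_T :
    ¬ ∃ f : (Fin 12 → ℤ) →ₗ[ℤ] (TIdx → ℤ),
        Function.Injective f ∧
        ∀ v w : Fin 12 → ℤ, f v ⬝ᵥ Tgram.mulVec (f w) = v ⬝ᵥ (Agram 12).mulVec w := by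
  rintro ⟨f, -, hf⟩
  have hgram : (LinearMap.toMatrix' f)ᵀ * Tgram * LinearMap.toMatrix' f = Agram 12 :=
    transpose_mul_mul_eq_of_dotProduct_mulVec fun v w => by
      simpa only [LinearMap.toMatrix'_mulVec] using hf v w
  have hrank := rank_map_le_of_transpose_mul_mul_eq (Int.castRingHom (ZMod 2)) hgram
  rw [rank_agram_twelve_map_two] at hrank
  have := rank_tgram_map_two_le
  omega
end

section
/- Let p be a prime number. Any embedding of the root lattice A_{p-1} into an even lattice L is primitive, i.e., the image of A_{p-1} equals its saturation in L. -/
/-!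
The Gram matrix of `A_n` factors as `Dᵀ D`, where the columns of `D` are the simple roots
`e_i - e_{i+1}` of `ℤ^{n+1}`; so for `v ∈ ℤ^n` the vector `d = D v` has coordinate sum `0`,
`v ⬝ A v = d ⬝ d`, and `(A v)_i = d_i - d_{i+1}`.

Saturation only has to be checked one prime `q` at a time. If `f v = q x`, the form gives
`q ∣ A v` and `q² ∣ v ⬝ A v`. The first says that all `d_j` are congruent to some `c` mod `q`,
so `q ∣ (n+1) c = p c`. For `q ≠ p` this gives `q ∣ c`. For `q = p`,
`0 ≡ ∑ (d_j - c)² = d ⬝ d + p c² ≡ p c² (mod p²)` gives `p ∣ c` again.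
Hence `q ∣ d`, and `q ∣ v` because `D` has an integral left inverse.
-/

open Matrix

theorem Submodule.mem_of_zsmul_mem_of_forall_prime {M : Type*} [AddCommGroup M]
    (S : Submodule ℤ M) (hS : ∀ q : ℕ, q.Prime → ∀ x : M, (q : ℤ) • x ∈ S → x ∈ S)
    {k : ℤ} (hk : k ≠ 0) {x : M} (hx : k • x ∈ S) : x ∈ S := by
  have key : ∀ n : ℕ, n ≠ 0 → ∀ x : M, (n : ℤ) • x ∈ S → x ∈ S := by
    intro n
    induction n using Nat.recOnMul with
    | zero => exact fun h => (h rfl).elim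
    | one => simp
    | prime q hq => exact fun _ => hS q hq
    | mul a b ha hb =>
      intro hab x hx
      rw [Nat.cast_mul, mul_smul] at hx
      exact hb (right_ne_zero_of_mul hab) x (ha (left_ne_zero_of_mul hab) _ hx)
  refine key k.natAbs (Int.natAbs_ne_zero.mpr hk) x ?_
  rcases Int.natAbs_eq k with h | h
  · rwa [← h]
  · rwa [← neg_neg (k.natAbs : ℤ), ← h, neg_smul, S.neg_mem_iff]

theorem Int.dvd_of_forall_dvd_sub_of_sum_eq_zero {ι : Type*} [Fintype ι] {q : ℕ} (hq : q.Prime)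
    (hcard : (Fintype.card ι).Prime) {d : ι → ℤ} {c : ℤ} (hd : ∀ j, (q : ℤ) ∣ d j - c)
    (hsum : ∑ j, d j = 0) (hsq : (q : ℤ) ^ 2 ∣ d ⬝ᵥ d) : (q : ℤ) ∣ c := by
  have hqz : Prime (q : ℤ) := Nat.prime_iff_prime_int.mp hq
  have hlin : ∑ j, (d j - c) = -(Fintype.card ι * c) := by
    simp [Finset.sum_sub_distrib, hsum]
  have hquad : ∑ j, (d j - c) ^ 2 = d ⬝ᵥ d + Fintype.card ι * c ^ 2 := by
    simp only [sub_sq, Finset.sum_add_distrib, Finset.sum_sub_distrib, ← Finset.sum_mul,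
      ← Finset.mul_sum, hsum, dotProduct]
    simp [sq]
  have hmul : (q : ℤ) ∣ Fintype.card ι * c := by
    rw [← dvd_neg, ← hlin]
    exact Finset.dvd_sum fun j _ => hd j
  rcases eq_or_ne (Fintype.card ι) q with hqc | hne
  · rw [hqc] at hquad
    have : (q : ℤ) * q ∣ q * c ^ 2 := by
      rw [← sq, ← dvd_add_right hsq, ← hquad]
      exact Finset.dvd_sum fun j _ => pow_dvd_pow_of_dvd (hd j) 2
    exact hqz.dvd_of_dvd_pow ((mul_dvd_mul_iff_left (by exact_mod_cast hq.ne_zero)).mp this)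
  · refine (hqz.dvd_mul.mp hmul).resolve_left fun h => hne (Eq.symm ?_)
    exact (Nat.prime_dvd_prime_iff_eq hq hcard).mp (Int.natCast_dvd_natCast.mp h)

theorem dvd_sub_apply_zero_of_dvd_sub_succ {n : ℕ} {q : ℤ} {d : Fin (n + 1) → ℤ}
    (h : ∀ i : Fin n, q ∣ d i.succ - d i.castSucc) (j : Fin (n + 1)) : q ∣ d j - d 0 := by
  induction j using Fin.induction with
  | zero => simp
  | succ i ih => simpa using dvd_add (h i) ih

namespace Agram

def simpleRoots (n : ℕ) : Matrix (Fin (n + 1)) (Fin n) ℤ :=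
  of fun j i => (if j = i.castSucc then 1 else 0) - (if j = i.succ then 1 else 0)

def partialSums (n : ℕ) : Matrix (Fin n) (Fin (n + 1)) ℤ :=
  of fun i j => if j ≤ i.castSucc then 1 else 0

theorem eq_transpose_simpleRoots_mul_simpleRoots (n : ℕ) :
    Agram n = (simpleRoots n)ᵀ * simpleRoots n := by
  ext i k
  simp only [Agram, Int.reduceNeg, simpleRoots, mul_apply, transpose_apply, of_apply, mul_sub,
    mul_ite, mul_one, mul_zero, Finset.sum_sub_distrib, Finset.sum_ite_eq', Finset.mem_univ,
    ↓reduceIte, Fin.castSucc_inj, Fin.succ_inj]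
  simp only [Fin.ext_iff, Fin.val_castSucc, Fin.val_succ]
  split_ifs <;> omega

theorem partialSums_mul_simpleRoots (n : ℕ) : partialSums n * simpleRoots n = 1 := by
  ext i k
  simp only [partialSums, simpleRoots, mul_apply, of_apply, mul_sub, mul_ite, mul_one, mul_zero,
    Finset.sum_sub_distrib, Finset.sum_ite_eq', Finset.mem_univ, ↓reduceIte,
    Fin.castSucc_le_castSucc_iff, Fin.succ_le_castSucc_iff, one_apply]
  simp only [Fin.ext_iff, Fin.le_def]
  split_ifs <;> omega

theorem sum_simpleRoots_mulVec {n : ℕ} (v : Fin n → ℤ) : ∑ j, (simpleRoots n *ᵥ v) j = 0 := by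
  simp [simpleRoots, mulVec, dotProduct, sub_mul, Finset.sum_sub_distrib,
    Finset.sum_comm (γ := Fin (n + 1))]

theorem dvd_of_forall_dvd_simpleRoots_mulVec {n : ℕ} {q : ℤ} {v : Fin n → ℤ}
    (h : ∀ j, q ∣ (simpleRoots n *ᵥ v) j) (i : Fin n) : q ∣ v i := by
  rw [← one_mulVec v, ← partialSums_mul_simpleRoots, ← mulVec_mulVec]
  simp only [mulVec, dotProduct]
  exact Finset.dvd_sum fun j _ => dvd_mul_of_dvd_right (h j) _

theorem dvd_apply_of_dvd_dotProduct_mulVec {n q : ℕ} (hn : (n + 1).Prime) (hq : q.Prime)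
    {v : Fin n → ℤ} (hlin : ∀ w, (q : ℤ) ∣ v ⬝ᵥ Agram n *ᵥ w)
    (hquad : (q : ℤ) ^ 2 ∣ v ⬝ᵥ Agram n *ᵥ v) (i : Fin n) : (q : ℤ) ∣ v i := by
  set d := simpleRoots n *ᵥ v
  have hform : ∀ w, v ⬝ᵥ Agram n *ᵥ w = d ⬝ᵥ simpleRoots n *ᵥ w := fun w => by
    rw [eq_transpose_simpleRoots_mul_simpleRoots, ← mulVec_mulVec, dotProduct_mulVec,
      vecMul_transpose]
  have hstep : ∀ k : Fin n, (q : ℤ) ∣ d k.succ - d k.castSucc := fun k => by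
    have hcol := dvd_neg.mpr (hlin (Pi.single k 1))
    rw [hform, mulVec_single_one] at hcol
    simpa [simpleRoots, dotProduct, mul_sub, Finset.sum_sub_distrib] using hcol
  have hd0 : (q : ℤ) ∣ d 0 := by
    refine Int.dvd_of_forall_dvd_sub_of_sum_eq_zero hq ?_
      (dvd_sub_apply_zero_of_dvd_sub_succ hstep) (sum_simpleRoots_mulVec v) ?_
    · rwa [Fintype.card_fin]
    · rwa [← hform]
  refine dvd_of_forall_dvd_simpleRoots_mulVec (fun j => ?_) i
  simpa using dvd_add (dvd_sub_apply_zero_of_dvd_sub_succ hstep j) hd0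

end Agram

theorem embedding_of_A_p_sub_one_is_primitive_general
    (p : ℕ) (hp : p.Prime) (m : ℕ) (G : Matrix (Fin m) (Fin m) ℤ)
    (f : (Fin (p - 1) → ℤ) →ₗ[ℤ] (Fin m → ℤ))
    (hform : ∀ v w : Fin (p - 1) → ℤ,
      f v ⬝ᵥ G.mulVec (f w) = v ⬝ᵥ (Agram (p - 1)).mulVec w) :
    ∀ x : Fin m → ℤ, (∃ k : ℤ, k ≠ 0 ∧ k • x ∈ LinearMap.range f) →
      x ∈ LinearMap.range f := by
  rintro x ⟨k, hk, hkx⟩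
  refine (LinearMap.range f).mem_of_zsmul_mem_of_forall_prime (fun q hq y ⟨v, hv⟩ => ?_) hk hkx
  have hdvd : ∀ i, (q : ℤ) ∣ v i := by
    refine Agram.dvd_apply_of_dvd_dotProduct_mulVec (by rwa [Nat.sub_add_cancel hp.one_le]) hq
      (fun w => ⟨y ⬝ᵥ G *ᵥ f w, ?_⟩) ⟨y ⬝ᵥ G *ᵥ y, ?_⟩
    · rw [← hform, hv, smul_dotProduct, smul_eq_mul]
    · rw [← hform, hv, mulVec_smul, smul_dotProduct, dotProduct_smul, smul_eq_mul, smul_eq_mul,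
        sq, mul_assoc]
  refine ⟨fun i => v i / q, smul_right_injective _ (Int.natCast_ne_zero.mpr hq.ne_zero) ?_⟩
  simp only [← hv, ← map_zsmul]
  congr 1
  funext i
  exact Int.mul_ediv_cancel' (hdvd i)

/-- For a prime `p`, any embedding of the root lattice `A_{p-1}` into an even
(nondegenerate, symmetric) lattice `L` is primitive: the image of `A_{p-1}` equals
its saturation in `L`, i.e. any `x ∈ L` with `k • x` in the image for some `k ≠ 0`
already lies in the image. -/
theorem embedding_of_A_p_sub_one_is_primitive
    (p : ℕ) (hp : p.Prime) (m : ℕ) (G : Matrix (Fin m) (Fin m) ℤ)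
    (hsymm : G.IsSymm)
    (hnd : (G.map (Int.cast : ℤ → ℚ)).det ≠ 0)
    (heven : ∀ v : Fin m → ℤ, Even (v ⬝ᵥ G.mulVec v))
    (f : (Fin (p - 1) → ℤ) →ₗ[ℤ] (Fin m → ℤ))
    (hinj : Function.Injective f)
    (hform : ∀ v w : Fin (p - 1) → ℤ,
      f v ⬝ᵥ G.mulVec (f w) = v ⬝ᵥ (Agram (p - 1)).mulVec w) :
    ∀ x : Fin m → ℤ, (∃ k : ℤ, k ≠ 0 ∧ k • x ∈ LinearMap.range f) →
      x ∈ LinearMap.range f :=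
  embedding_of_A_p_sub_one_is_primitive_general p hp m G f hform
end
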